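/- Let A > 0 and u* = 2A/(B+1) with B > 1. The tangent lines at (u*, 0) of the two solution branches q(u) of the equation H_d(u,q) = H_d(u*, 0), where H_d(u,q) = q²/2 + (B+1)ln(u) + A(B+3)/u - A²/u², have slopes ∓√(B-1)(1+B)^{3/2}/(2√2 A); in particular the slopes are nonzero and of opposite sign, so the two branches cross transversely at (u*,0). -/

import Mathlib

open Filter

/-- The Hamiltonian of the desingularized reduced system. -/
noncomputable def brusselatorHd (A B u q : ℝ) : ℝ :=
  q ^ 2 / 2 + (B + 1) * Real.log u + A * (B + 3) / u - A ^ 2 / u ^ 2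

/-- At the reversible folded saddle (u*,0) = (2A/(B+1),0) with B > 1, any
differentiable solution branch q(u) of H_d(u,q(u)) = H_d(u*,0) through (u*,0)
has tangent slope ±√(B-1)(1+B)^{3/2}/(2√2 A); this slope is nonzero, so the
true and faux canard branches cross transversely at (u*,0). -/
theorem brusselator_RFS_canard_slopes (A B : ℝ) (hA : 0 < A) (hB : 1 < B)
    (q q' : ℝ → ℝ)
    (hq : ∀ u : ℝ, HasDerivAt q (q' u) u)
    (hq0 : q (2 * A / (B + 1)) = 0)
    (hH : ∀ᶠ u in nhds (2 * A / (B + 1)),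
      brusselatorHd A B u (q u) = brusselatorHd A B (2 * A / (B + 1)) 0) :
    let m : ℝ := Real.sqrt (B - 1) * Real.sqrt ((1 + B) ^ 3) / (2 * Real.sqrt 2 * A)
    0 < m ∧ (q' (2 * A / (B + 1)) = m ∨ q' (2 * A / (B + 1)) = -m) := by
  intro m
  have hB1 : (0:ℝ) < B + 1 := by linarith
  have hAne : A ≠ 0 := ne_of_gt hA
  have hBne : B + 1 ≠ 0 := ne_of_gt hB1
  set s : ℝ := 2 * A / (B + 1) with hs
  have hspos : 0 < s := by positivity
  have hsne : s ≠ 0 := ne_of_gt hspos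
  -- The potential part of the Hamiltonian and its first two derivatives
  set G : ℝ → ℝ := fun u => (B + 1) * Real.log u + A * (B + 3) / u - A ^ 2 / u ^ 2
    with hG
  set G' : ℝ → ℝ := fun u => (B + 1) / u - A * (B + 3) / u ^ 2 + 2 * A ^ 2 / u ^ 3
    with hG'
  have hGder : ∀ u : ℝ, 0 < u → HasDerivAt G (G' u) u := by
    intro u hu
    have hune : u ≠ 0 := ne_of_gt hu
    have h1 : HasDerivAt (fun x : ℝ => (B + 1) * Real.log x) ((B + 1) * u⁻¹) u :=
      (Real.hasDerivAt_log hune).const_mul _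
    have h2 : HasDerivAt (fun x : ℝ => A * (B + 3) / x) (A * (B + 3) * (-(u ^ 2)⁻¹)) u := by
      simpa [div_eq_mul_inv] using (hasDerivAt_inv hune).const_mul (A * (B + 3))
    have hp2 : HasDerivAt (fun x : ℝ => x ^ 2) (2 * u) u := by
      simpa using hasDerivAt_pow 2 u
    have h3 : HasDerivAt (fun x : ℝ => A ^ 2 / x ^ 2)
        (A ^ 2 * (-(2 * u) / (u ^ 2) ^ 2)) u := by
      simp only [div_eq_mul_inv]
      exact (hp2.inv (pow_ne_zero 2 hune)).const_mul (A ^ 2)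
    have hsum := (h1.add h2).sub h3
    convert hsum using 1
    · rfl
    · rfl
    · rfl
    rw [hG']
    field_simp
    ring
  have hG'der : HasDerivAt G' (-((B - 1) * (B + 1) ^ 3 / (8 * A ^ 2))) s := by
    have h1 : HasDerivAt (fun x : ℝ => (B + 1) / x) ((B + 1) * (-(s ^ 2)⁻¹)) s := by
      simpa [div_eq_mul_inv] using (hasDerivAt_inv hsne).const_mul (B + 1)
    have hp2 : HasDerivAt (fun x : ℝ => x ^ 2) (2 * s) s := by simpa using hasDerivAt_pow 2 s
    have hp3 : HasDerivAt (fun x : ℝ => x ^ 3) (3 * s ^ 2) s := by simpa using hasDerivAt_pow 3 s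
    have h2 : HasDerivAt (fun x : ℝ => A * (B + 3) / x ^ 2)
        (A * (B + 3) * (-(2 * s) / (s ^ 2) ^ 2)) s := by
      simp only [div_eq_mul_inv]
      exact (hp2.inv (pow_ne_zero 2 hsne)).const_mul (A * (B + 3))
    have h3 : HasDerivAt (fun x : ℝ => 2 * A ^ 2 / x ^ 3)
        (2 * A ^ 2 * (-(3 * s ^ 2) / (s ^ 3) ^ 2)) s := by
      simp only [div_eq_mul_inv]
      exact (hp3.inv (pow_ne_zero 3 hsne)).const_mul (2 * A ^ 2)
    have hsum := (h1.sub h2).add h3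
    convert hsum using 1
    · rfl
    · rfl
    · rfl
    rw [hs]
    field_simp
    ring
  have hG's : G' s = 0 := by
    rw [hG', hs]
    field_simp
    ring
  -- value of m squared
  have hm2 : m ^ 2 = (B - 1) * (B + 1) ^ 3 / (8 * A ^ 2) := by
    have h1 : (0:ℝ) ≤ B - 1 := by linarith
    have h2 : (0:ℝ) ≤ (1 + B) ^ 3 := by positivity
    have h3 : (0:ℝ) ≤ 2 := by norm_num
    have e1 : Real.sqrt (B - 1) ^ 2 = B - 1 := Real.sq_sqrt h1
    have e2 : Real.sqrt ((1 + B) ^ 3) ^ 2 = (1 + B) ^ 3 := Real.sq_sqrt h2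
    have e3 : Real.sqrt 2 ^ 2 = 2 := Real.sq_sqrt h3
    show (Real.sqrt (B - 1) * Real.sqrt ((1 + B) ^ 3) / (2 * Real.sqrt 2 * A)) ^ 2 = _
    rw [div_pow, mul_pow, mul_pow, mul_pow, e1, e2, e3]
    ring
  have hmpos : 0 < m := by
    have h1 : (0:ℝ) < Real.sqrt (B - 1) := Real.sqrt_pos.mpr (by linarith)
    have h2 : (0:ℝ) < Real.sqrt ((1 + B) ^ 3) := Real.sqrt_pos.mpr (by positivity)
    have h3 : (0:ℝ) < Real.sqrt 2 := Real.sqrt_pos.mpr (by norm_num)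
    exact div_pos (mul_pos h1 h2) (by positivity)
  -- q u ^ 2 = 2 * (G s - G u) eventually
  have hq2 : ∀ᶠ u in nhds s, q u ^ 2 = 2 * (G s - G u) := by
    filter_upwards [hH] with u hu
    simp only [brusselatorHd] at hu
    simp only [hG]
    nlinarith [hu]
  -- slope of q tends to q' s, hence (q u)^2/(u-s)^2 tends to (q' s)^2
  have hslope : Tendsto (fun u => q u / (u - s)) (nhdsWithin s {s}ᶜ) (nhds (q' s)) := by
    have h := hasDerivAt_iff_tendsto_slope.mp (hq s)
    refine h.congr' ?_
    filter_upwards [self_mem_nhdsWithin] with u hu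
    simp [slope_def_field, hq0, div_eq_mul_inv, mul_comm]
  have hsq : Tendsto (fun u => q u ^ 2 / (u - s) ^ 2) (nhdsWithin s {s}ᶜ)
      (nhds (q' s ^ 2)) := by
    simpa only [pow_two, div_mul_div_comm] using hslope.mul hslope
  -- L'Hopital: 2*(G s - G u)/(u - s)^2 tends to -G''(s)
  have hcontG : ∀ᶠ u in nhds s, HasDerivAt (fun x => 2 * (G s - G x)) (-2 * G' u) u := by
    filter_upwards [eventually_gt_nhds hspos] with u hu
    have := ((hGder u hu).const_sub (G s)).const_mul 2
    convert this using 1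
    · rfl
    · rfl
    ring
  have hlh : Tendsto (fun u => (2 * (G s - G u)) / (u - s) ^ 2) (nhdsWithin s {s}ᶜ)
      (nhds ((B - 1) * (B + 1) ^ 3 / (8 * A ^ 2))) := by
    apply HasDerivAt.lhopital_zero_nhdsNE (f' := fun u => -2 * G' u)
      (g' := fun u => 2 * (u - s))
    · exact eventually_nhdsWithin_of_eventually_nhds hcontG
    · refine Eventually.of_forall fun u => ?_
      have h := ((hasDerivAt_id u).sub_const s).pow 2
      simp at h
      exact h
    · filter_upwards [self_mem_nhdsWithin] with u hu
      exact mul_ne_zero two_ne_zero (sub_ne_zero.mpr hu)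
    · have hc : ContinuousAt (fun u => 2 * (G s - G u)) s :=
        (hcontG.self_of_nhds).continuousAt
      have h : Tendsto (fun u => 2 * (G s - G u)) (nhds s) (nhds (2 * (G s - G s))) := hc
      simpa using tendsto_nhdsWithin_of_tendsto_nhds h
    · have h : Tendsto (fun u : ℝ => (u - s) ^ 2) (nhds s) (nhds ((s - s) ^ 2)) :=
        ((continuous_id.sub continuous_const).pow 2).continuousAt
      simpa using tendsto_nhdsWithin_of_tendsto_nhds h
    · have hsl := hasDerivAt_iff_tendsto_slope.mp hG'der
      have h := hsl.neg
      rw [neg_neg] at h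
      refine h.congr' ?_
      filter_upwards [self_mem_nhdsWithin] with u hu
      have hne : u - s ≠ 0 := sub_ne_zero.mpr hu
      rw [slope_def_field, hG's]
      field_simp
      ring
  -- combine
  have hev : ∀ᶠ u in nhdsWithin s {s}ᶜ, q u ^ 2 / (u - s) ^ 2
      = (2 * (G s - G u)) / (u - s) ^ 2 := by
    filter_upwards [eventually_nhdsWithin_of_eventually_nhds hq2] with u hu
    rw [hu]
  have huniq : q' s ^ 2 = (B - 1) * (B + 1) ^ 3 / (8 * A ^ 2) :=
    tendsto_nhds_unique (hsq.congr' hev) hlh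
  have hfin : q' s ^ 2 = m ^ 2 := by rw [huniq, hm2]
  refine ⟨hmpos, ?_⟩
  have hz : (q' s - m) * (q' s + m) = 0 := by nlinarith [hfin]
  rcases mul_eq_zero.mp hz with h | h
  · left; linarith
  · right; linarith
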